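/- arXiv:2203.04652 — 3 statements merged into one kernel-verified Lean document; each statement's English description precedes it below -/
import Mathlib

section
/- Let G be a connected accessible graph, let B be a block of G, and let V = {v₁,…,v_k} be the set of cut vertices of G belonging to V(B). Then for every subset W ⊆ V, the graph B̄^W is accessible. In particular, B̄ = B̄^V is accessible. -/
/-!
Each branch `G_w` with `w ∈ W` is connected and hangs from `G` at the single vertex `w`, so
collapsing `G_w ∖ {w}` onto the whisker vertex `f_w` preserves the number of components of
`G ∖ S` for every `S` inside `D = B ∪ ⋃_{w ∉ W} G_w`. Whisker vertices are leaves and hence never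
cut vertices, so the cutsets of `B̄^W` are exactly the cutsets of `G` contained in `D`, with the
same component counts; unmixedness and accessibility of `G` therefore pass to `B̄^W`.
-/

open SimpleGraph

universe u u'

/-- The number of connected components of the induced subgraph of `G` on the vertex set `A`. -/
noncomputable def cComp {V : Type u} (G : SimpleGraph V) (A : Set V) : ℕ :=
  Nat.card (G.induce A).ConnectedComponent

/-- `x` is a cut vertex of the induced subgraph of `G` on `A`: removing `x`
increases the number of connected components. -/
def CutVertexOn {V : Type u} (G : SimpleGraph V) (A : Set V) (x : V) : Prop :=
  x ∈ A ∧ cComp G A < cComp G (A \ {x})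

/-- `T` is a cutset of the induced subgraph of `G` on `A`: every `t ∈ T` is a
cut vertex of `G[A] ∖ (T ∖ {t})`. -/
def CutsetOn {V : Type u} [DecidableEq V] (G : SimpleGraph V) (A : Set V) (T : Finset V) :
    Prop :=
  ↑T ⊆ A ∧ ∀ t ∈ T, CutVertexOn G (A \ ↑(T.erase t)) t

/-- The binomial edge ideal of the induced subgraph of `G` on `A` is unmixed
(combinatorial characterization): `c(T) = |T| + c(∅)` for every cutset `T`. -/
def UnmixedOn {V : Type u} [DecidableEq V] (G : SimpleGraph V) (A : Set V) : Prop :=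
  ∀ T : Finset V, CutsetOn G A T → cComp G (A \ ↑T) = T.card + cComp G A

/-- The induced subgraph of `G` on `A` is accessible. -/
def AccessibleOn {V : Type u} [DecidableEq V] (G : SimpleGraph V) (A : Set V) : Prop :=
  UnmixedOn G A ∧
    ∀ T : Finset V, CutsetOn G A T → T.Nonempty → ∃ t ∈ T, CutsetOn G A (T.erase t)

/-- The graph `(G[A])_x`: add all edges between neighbours of `x` lying in `A`. -/
def cliqueAtOn {V : Type u} (G : SimpleGraph V) (A : Set V) (x : V) : SimpleGraph V :=
  G ⊔ SimpleGraph.fromRel (fun a b => a ∈ A ∧ b ∈ A ∧ G.Adj x a ∧ G.Adj x b)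

/-- The binomial edge ideal of the induced subgraph of `G` on `A` is strongly unmixed. -/
inductive StronglyUnmixedOn {V : Type u} [DecidableEq V] : SimpleGraph V → Set V → Prop
  | complete (G : SimpleGraph V) (A : Set V)
      (h : ∀ a b : A, (G.induce A).Reachable a b → a ≠ b → (G.induce A).Adj a b) :
      StronglyUnmixedOn G A
  | cut (G : SimpleGraph V) (A : Set V) (hU : UnmixedOn G A) (x : V)
      (hx : CutVertexOn G A x)
      (h1 : StronglyUnmixedOn G (A \ {x}))
      (h2 : StronglyUnmixedOn (cliqueAtOn G A x) A)
      (h3 : StronglyUnmixedOn (cliqueAtOn G A x) (A \ {x})) :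
      StronglyUnmixedOn G A

/-- `x` is a free vertex of `G`: the induced subgraph on `N(x) ∪ {x}` is complete. -/
def FreeVertex {V : Type u} (G : SimpleGraph V) (x : V) : Prop :=
  ∀ a b : V, G.Adj x a → G.Adj x b → a ≠ b → G.Adj a b

/-- Attach a whisker (pendant vertex) at each vertex of `Wv`.  `Sum.inl a` is the
original vertex `a` and `Sum.inr x` is the whisker vertex `f_x` attached at `x ∈ Wv`. -/
def whiskered {V : Type u} (G : SimpleGraph V) (Wv : Set V) : SimpleGraph (V ⊕ V) :=
  SimpleGraph.fromRel (fun a b =>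
    (∃ x y, G.Adj x y ∧ a = Sum.inl x ∧ b = Sum.inl y) ∨
    (∃ x ∈ Wv, a = Sum.inl x ∧ b = Sum.inr x))

/-- `B` is (the vertex set of) a block of `G`: a maximal connected induced
subgraph having no cut vertex. -/
def IsBlock {V : Type u} (G : SimpleGraph V) (B : Set V) : Prop :=
  (G.induce B).Connected ∧ (∀ x, ¬ CutVertexOn G B x) ∧
    ∀ B' : Set V, B ⊆ B' → (G.induce B').Connected → (∀ x, ¬ CutVertexOn G B' x) → B' = B

/-- Glue two graphs `G` and `H`, identifying the vertex `x` of `G` with the vertex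
`y` of `H` (the identified vertex is `Sum.inl x`). -/
def glueAt {V : Type u} {W : Type u'} (G : SimpleGraph V) (H : SimpleGraph W) (x : V) (y : W) :
    SimpleGraph (V ⊕ W) :=
  SimpleGraph.fromRel (fun a b =>
    (∃ p q, G.Adj p q ∧ a = Sum.inl p ∧ b = Sum.inl q) ∨
    (∃ p q, H.Adj p q ∧ p ≠ y ∧ q ≠ y ∧ a = Sum.inr p ∧ b = Sum.inr q) ∨
    (∃ q, H.Adj y q ∧ a = Sum.inl x ∧ b = Sum.inr q))

/-- The star product `K_m ⋆_r K_n`: two complete graphs, on `{x₁,…,x_m}` (the `inl`s)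
and `{y₁,…,y_n}` (the `inr`s), together with the matching edges `{x_i, y_i}` for `1 ≤ i ≤ r`
(indices `0,…,r-1` here). -/
def starProd (m n r : ℕ) : SimpleGraph (Fin m ⊕ Fin n) :=
  SimpleGraph.fromRel (fun a b =>
    (∃ x y : Fin m, a = Sum.inl x ∧ b = Sum.inl y) ∨
    (∃ x y : Fin n, a = Sum.inr x ∧ b = Sum.inr y) ∨
    (∃ (x : Fin m) (y : Fin n), (x : ℕ) = (y : ℕ) ∧ (x : ℕ) < r ∧
      a = Sum.inl x ∧ b = Sum.inr y))

/-- The vertices `x_i, y_i` for `2 ≤ i ≤ r` (indices `1,…,r-1` here), at which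
whiskers are attached to form `overline(K_m ⋆_r K_n)`. -/
def starWhisk (m n r : ℕ) : Set (Fin m ⊕ Fin n) :=
  {a | (∃ x : Fin m, a = Sum.inl x ∧ 1 ≤ (x : ℕ) ∧ (x : ℕ) < r) ∨
       (∃ y : Fin n, a = Sum.inr y ∧ 1 ≤ (y : ℕ) ∧ (y : ℕ) < r)}

/-- `a` and `b` both lie in `A` and are joined by a path of the induced subgraph of `G` on `A`. -/
def ReachIn {V : Type u} (G : SimpleGraph V) (A : Set V) (a b : V) : Prop :=
  ∃ (ha : a ∈ A) (hb : b ∈ A), (G.induce A).Reachable ⟨a, ha⟩ ⟨b, hb⟩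

/-- Auxiliary (connected case): `G[A]` has no cut vertex, or for every cut vertex `x`,
every connected component of `G[A] ∖ {x}` contains at most `r` cut vertices of `G[A] ∖ {x}`. -/
def RCutConnAux {V : Type u} (G : SimpleGraph V) (A : Set V) (r : ℕ) : Prop :=
  (∀ x, ¬ CutVertexOn G A x) ∨
    ∀ x, CutVertexOn G A x → ∀ a ∈ A \ {x},
      Set.ncard {w | CutVertexOn G (A \ {x}) w ∧ ReachIn G (A \ {x}) a w} ≤ r

/-- `G[A]` is `r`-cut-connected: every connected component of `G[A]` satisfies the
condition of `RCutConnAux`. -/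
def RCutConn {V : Type u} (G : SimpleGraph V) (A : Set V) (r : ℕ) : Prop :=
  ∀ a ∈ A, RCutConnAux G {b | ReachIn G A a b} r

/-- `G[A]` is strongly `r`-cut-connected: it is `r`-cut-connected and, recursively,
`G[A] ∖ {x}` is strongly `r`-cut-connected for every cut vertex `x`. -/
inductive StronglyRCutConn {V : Type u} (r : ℕ) : SimpleGraph V → Set V → Prop
  | mk (G : SimpleGraph V) (A : Set V) (h1 : RCutConn G A r)
      (h2 : ∀ x, CutVertexOn G A x → StronglyRCutConn r G (A \ {x})) :
      StronglyRCutConn r G A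

namespace SimpleGraph

variable {V U : Type*} {G : SimpleGraph V} {H : SimpleGraph U}

lemma Reachable.map_of_adj_reachable (f : V → U)
    (hf : ∀ a b, G.Adj a b → H.Reachable (f a) (f b)) {a b : V} (h : G.Reachable a b) :
    H.Reachable (f a) (f b) := by
  rw [reachable_iff_reflTransGen] at h ⊢
  exact Relation.ReflTransGen.lift' f
    (fun a b hab => (reachable_iff_reflTransGen _ _).1 (hf a b hab)) _ _ h

end SimpleGraph

section ReachIn

variable {V U : Type*} {G : SimpleGraph V} {H : SimpleGraph U} {X Y : Set V} {a b c : V}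

lemma reachIn_refl (ha : a ∈ X) : ReachIn G X a a := ⟨ha, ha, .refl _⟩

lemma ReachIn.of_adj (ha : a ∈ X) (hb : b ∈ X) (h : G.Adj a b) : ReachIn G X a b :=
  ⟨ha, hb, Adj.reachable (G := G.induce X) h⟩

lemma ReachIn.symm : ReachIn G X a b → ReachIn G X b a :=
  fun ⟨ha, hb, h⟩ => ⟨hb, ha, h.symm⟩

lemma ReachIn.trans : ReachIn G X a b → ReachIn G X b c → ReachIn G X a c :=
  fun ⟨ha, _, h⟩ ⟨_, hc, h'⟩ => ⟨ha, hc, h.trans h'⟩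

lemma ReachIn.map {X : Set V} {Y : Set U} (f : V → U) (hf : Set.MapsTo f X Y)
    (hadj : ∀ a ∈ X, ∀ b ∈ X, G.Adj a b → ReachIn H Y (f a) (f b)) :
    ReachIn G X a b → ReachIn H Y (f a) (f b) := by
  rintro ⟨ha, hb, h⟩
  refine ⟨hf ha, hf hb, h.map_of_adj_reachable (H := H.induce Y)
    (fun v : X => (⟨f v, hf v.2⟩ : Y)) ?_⟩
  rintro ⟨u, hu⟩ ⟨v, hv⟩ huv
  exact (hadj u hu v hv huv).2.2

lemma ReachIn.mono (hXY : X ⊆ Y) : ReachIn G X a b → ReachIn G Y a b :=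
  ReachIn.map id hXY fun _ ha _ hb h => .of_adj (hXY ha) (hXY hb) h

lemma SimpleGraph.Preconnected.reachIn (hX : (G.induce X).Preconnected) (ha : a ∈ X)
    (hb : b ∈ X) : ReachIn G X a b :=
  ⟨ha, hb, hX _ _⟩

lemma cComp_le_of_reachIn [Finite U] {X : Set V} {Y : Set U} (f : V → U)
    (hf : Set.MapsTo f X Y)
    (hadj : ∀ a ∈ X, ∀ b ∈ X, G.Adj a b → ReachIn H Y (f a) (f b))
    (hreflect : ∀ a ∈ X, ∀ b ∈ X, ReachIn H Y (f a) (f b) → ReachIn G X a b) :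
    cComp G X ≤ cComp H Y := by
  have : Finite (H.induce Y).ConnectedComponent := Quot.finite _
  let F : (G.induce X).ConnectedComponent → (H.induce Y).ConnectedComponent :=
    ConnectedComponent.lift (fun v => (H.induce Y).connectedComponentMk ⟨f v, hf v.2⟩)
      fun v w p _ =>
        ConnectedComponent.eq.mpr (ReachIn.map f hf hadj ⟨v.2, w.2, p.reachable⟩).2.2
  refine Nat.card_le_card_of_injective F fun c c' => ?_
  induction c using ConnectedComponent.ind with | _ v =>
  induction c' using ConnectedComponent.ind with | _ w =>
  intro h
  exact ConnectedComponent.eq.mpr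
    (hreflect v v.2 w w.2 ⟨hf v.2, hf w.2, ConnectedComponent.eq.mp h⟩).2.2

lemma cComp_eq_of_reachIn [Finite V] [Finite U] {X : Set V} {Y : Set U} (f : V → U)
    (g : U → V) (hf : Set.MapsTo f X Y) (hg : Set.MapsTo g Y X)
    (hf_adj : ∀ a ∈ X, ∀ b ∈ X, G.Adj a b → ReachIn H Y (f a) (f b))
    (hg_adj : ∀ a ∈ Y, ∀ b ∈ Y, H.Adj a b → ReachIn G X (g a) (g b))
    (hgf : ∀ a ∈ X, ReachIn G X (g (f a)) a) (hfg : ∀ b ∈ Y, ReachIn H Y (f (g b)) b) :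
    cComp G X = cComp H Y := by
  refine le_antisymm (cComp_le_of_reachIn f hf hf_adj fun a ha b hb h => ?_)
    (cComp_le_of_reachIn g hg hg_adj fun a ha b hb h => ?_)
  · exact (hgf a ha).symm.trans ((h.map g hg hg_adj).trans (hgf b hb))
  · exact (hfg a ha).symm.trans ((h.map f hf hf_adj).trans (hfg b hb))

end ReachIn

section Pendant

variable {V : Type*} {G : SimpleGraph V}

lemma ReachIn.diff_singleton {X : Set V} {x c a b : V} (hc : c ∈ X \ {x})
    (hxc : ∀ y ∈ X, G.Adj x y → y = c) (ha : a ≠ x) (hb : b ≠ x) (h : ReachIn G X a b) :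
    ReachIn G (X \ {x}) a b := by
  classical
  -- every edge at `x` ends in `c`, so retracting `x` onto `c` maps edges to walks avoiding `x`
  let r : V → V := fun v => if v = x then c else v
  have hr : Set.MapsTo r X (X \ {x}) := fun v hv => by
    by_cases hvx : v = x
    · simpa [r, hvx] using hc
    · simpa [r, hvx] using hv
  have hadj : ∀ u ∈ X, ∀ v ∈ X, G.Adj u v → ReachIn G (X \ {x}) (r u) (r v) := by
    intro u hu v hv huv
    by_cases hux : u = x
    · subst hux
      simpa [r, huv.ne', hxc v hv huv] using reachIn_refl hc
    by_cases hvx : v = x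
    · subst hvx
      simpa [r, hux, hxc u hu huv.symm] using reachIn_refl hc
    · simpa [r, hux, hvx] using ReachIn.of_adj (X := X \ {x}) ⟨hu, hux⟩ ⟨hv, hvx⟩ huv
  simpa [r, ha, hb] using h.map r hr hadj

lemma not_cutVertexOn_of_subsingleton_neighbors [Finite V] {X : Set V} {x : V}
    (hx : {y | y ∈ X ∧ G.Adj x y}.Subsingleton) : ¬ CutVertexOn G X x := by
  rintro ⟨-, hlt⟩
  refine hlt.not_ge (cComp_le_of_reachIn id Set.sdiff_subset
    (fun a ha b hb h => .of_adj ha.1 hb.1 h) fun a ha b hb h => ?_)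
  by_cases hnbr : ∃ y ∈ X, G.Adj x y
  · obtain ⟨c, hcX, hxc⟩ := hnbr
    exact ReachIn.diff_singleton ⟨hcX, hxc.ne'⟩
      (fun y hy hxy => hx ⟨hy, hxy⟩ ⟨hcX, hxc⟩) ha.2 hb.2 h
  · push Not at hnbr
    exact ReachIn.diff_singleton ha (fun y hy hxy => absurd hxy (hnbr y hy))
      ha.2 hb.2 h

end Pendant

lemma cutVertexOn_diff_erase_iff {V : Type*} [DecidableEq V] {G : SimpleGraph V} {A : Set V}
    {T : Finset V} {t : V} (ht : t ∈ T) :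
    CutVertexOn G (A \ ↑(T.erase t)) t ↔
      t ∈ A ∧ cComp G (A \ ↑(T.erase t)) < cComp G (A \ ↑T) := by
  rw [CutVertexOn, Set.sdiff_sdiff, Finset.coe_erase,
    Set.sdiff_union_of_subset (by simpa using ht)]
  simp

section Whiskered

variable {V : Type*} {G : SimpleGraph V} {W : Set V}

@[simp]
lemma whiskered_adj_inl_inl {a b : V} : (whiskered G W).Adj (.inl a) (.inl b) ↔ G.Adj a b := by
  simp only [whiskered, fromRel_adj]
  constructor
  · rintro ⟨-, (⟨x, y, hxy, h1, h2⟩ | ⟨x, -, h1, h2⟩) |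
        (⟨x, y, hxy, h1, h2⟩ | ⟨x, -, h1, h2⟩)⟩ <;> simp_all [adj_comm]
  · intro h
    exact ⟨by simpa using h.ne, .inl (.inl ⟨a, b, h, rfl, rfl⟩)⟩

@[simp]
lemma whiskered_adj_inl_inr {a b : V} :
    (whiskered G W).Adj (.inl a) (.inr b) ↔ a = b ∧ a ∈ W := by
  simp only [whiskered, fromRel_adj]
  constructor
  · rintro ⟨-, (⟨x, y, hxy, h1, h2⟩ | ⟨x, hx, h1, h2⟩) |
        (⟨x, y, hxy, h1, h2⟩ | ⟨x, hx, h1, h2⟩)⟩ <;> simp_all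
  · rintro ⟨rfl, h⟩
    exact ⟨by simp, .inl (.inr ⟨a, h, rfl, rfl⟩)⟩

lemma eq_inl_of_whiskered_adj_inr {w : V} {y : V ⊕ V} (h : (whiskered G W).Adj (.inr w) y) :
    y = .inl w := by
  obtain (a | b) := y
  · simpa [eq_comm] using (whiskered_adj_inl_inr.mp h.symm).1
  · simp [whiskered] at h

end Whiskered

section WhiskerTransfer

variable {V : Type*} [DecidableEq V] {G : SimpleGraph V} {D W : Set V}

lemma exists_image_inl_of_cutsetOn_whiskered [Finite V] {T : Finset (V ⊕ V)}
    (hT : CutsetOn (whiskered G W) (Sum.inl '' D ∪ Sum.inr '' W) T) :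
    ∃ S : Finset V, ↑S ⊆ D ∧ S.image Sum.inl = T := by
  refine Finset.subset_set_image_iff.mp fun t ht => ?_
  obtain ⟨htA, -⟩ := hT.2 t ht
  obtain (⟨v, hv, rfl⟩ | ⟨w, -, rfl⟩) := htA.1
  · exact ⟨v, hv, rfl⟩
  · exact absurd (hT.2 _ ht) (not_cutVertexOn_of_subsingleton_neighbors fun y hy z hz =>
      (eq_inl_of_whiskered_adj_inr hy.2).trans (eq_inl_of_whiskered_adj_inr hz.2).symm)

lemma cutsetOn_whiskered_image_inl_iff
    (hcount : ∀ S : Finset V, ↑S ⊆ D →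
      cComp (whiskered G W) ((Sum.inl '' D ∪ Sum.inr '' W) \ Sum.inl '' ↑S) =
        cComp G (Set.univ \ ↑S))
    {S : Finset V} (hS : ↑S ⊆ D) :
    CutsetOn (whiskered G W) (Sum.inl '' D ∪ Sum.inr '' W) (S.image Sum.inl) ↔
      CutsetOn G Set.univ S := by
  have hvertex : ∀ v ∈ S, CutVertexOn (whiskered G W)
      ((Sum.inl '' D ∪ Sum.inr '' W) \ ↑((S.image Sum.inl).erase (Sum.inl v : V ⊕ V)))
        (.inl v) ↔
      CutVertexOn G (Set.univ \ ↑(S.erase v)) v := by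
    intro v hv
    have hSv : ↑(S.erase v) ⊆ D := fun u hu => hS (Finset.mem_of_mem_erase hu)
    rw [cutVertexOn_diff_erase_iff (Finset.mem_image_of_mem _ hv), cutVertexOn_diff_erase_iff hv,
      ← Finset.image_erase Sum.inl_injective, Finset.coe_image, Finset.coe_image, hcount _ hSv,
      hcount _ hS]
    simp [hS hv]
  simp only [CutsetOn, Finset.forall_mem_image, Finset.coe_image, Set.subset_univ, true_and]
  refine (and_iff_right (Set.image_mono hS |>.trans Set.subset_union_left)).trans ?_
  exact forall₂_congr hvertex

theorem accessibleOn_whiskered_of_cComp_eq [Finite V]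
    (hcount : ∀ S : Finset V, ↑S ⊆ D →
      cComp (whiskered G W) ((Sum.inl '' D ∪ Sum.inr '' W) \ Sum.inl '' ↑S) =
        cComp G (Set.univ \ ↑S))
    (hacc : AccessibleOn G Set.univ) :
    AccessibleOn (whiskered G W) (Sum.inl '' D ∪ Sum.inr '' W) := by
  have hcomp := hcount ∅ (Finset.coe_empty ▸ Set.empty_subset D)
  simp only [Finset.coe_empty, Set.image_empty, Set.sdiff_empty] at hcomp
  refine ⟨fun T hT => ?_, fun T hT hne => ?_⟩
  all_goals obtain ⟨S, hS, rfl⟩ := exists_image_inl_of_cutsetOn_whiskered hT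
  all_goals have hSG := (cutsetOn_whiskered_image_inl_iff hcount hS).mp hT
  · rw [Finset.coe_image, hcount S hS, hacc.1 S hSG, hcomp,
      Finset.card_image_of_injective S Sum.inl_injective]
  · obtain ⟨v, hv, hvS⟩ := hacc.2 S hSG (Finset.image_nonempty.mp hne)
    refine ⟨.inl v, Finset.mem_image_of_mem _ hv, ?_⟩
    rw [← Finset.image_erase Sum.inl_injective]
    exact (cutsetOn_whiskered_image_inl_iff hcount
      (fun u hu => hS (Finset.mem_of_mem_erase hu))).mpr hvS

end WhiskerTransfer

section PendantBranches

variable {V : Type*} {G : SimpleGraph V} {D W : Set V} {root : V → V}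

/-- `root v` is the vertex `w ∈ W` from which the branch containing `v ∉ D` hangs. -/
structure HasPendantBranches (G : SimpleGraph V) (D W : Set V) (root : V → V) : Prop where
  subset : W ⊆ D
  root_mem : ∀ v ∉ D, root v ∈ W
  exists_adj : ∀ w ∈ W, ∃ z ∉ D, root z = w ∧ G.Adj w z
  preconnected : ∀ w ∈ W, (G.induce {v | v ∉ D ∧ root v = w}).Preconnected
  adj : ∀ a b, G.Adj a b → a ∉ D → (b ∉ D ∧ root b = root a) ∨ b = root a

open Classical in
noncomputable def collapseBranches (D : Set V) (root : V → V) (v : V) : V ⊕ V :=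
  if v ∈ D then .inl v else .inr (root v)

lemma collapseBranches_of_mem {v : V} (hv : v ∈ D) : collapseBranches D root v = .inl v :=
  if_pos hv

lemma collapseBranches_of_notMem {v : V} (hv : v ∉ D) :
    collapseBranches D root v = .inr (root v) :=
  if_neg hv

variable {S : Set V}

section Attach

variable {z : V → V}

lemma mapsTo_elim_attach (hz : ∀ w ∈ W, z w ∉ D ∧ root (z w) = w ∧ G.Adj w (z w))
    (hS : S ⊆ D) :
    Set.MapsTo (Sum.elim id z) ((Sum.inl '' D ∪ Sum.inr '' W) \ Sum.inl '' S) (Set.univ \ S) := by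
  rintro (v | w) hvw
  · exact ⟨trivial, fun hvS => hvw.2 ⟨v, hvS, rfl⟩⟩
  · exact ⟨trivial, fun hzS => (hz w (by simpa using hvw.1)).1 (hS hzS)⟩

lemma reachIn_elim_attach_of_adj (hz : ∀ w ∈ W, z w ∉ D ∧ root (z w) = w ∧ G.Adj w (z w))
    (hS : S ⊆ D) {a b : V ⊕ V} (ha : a ∈ (Sum.inl '' D ∪ Sum.inr '' W) \ Sum.inl '' S)
    (hb : b ∈ (Sum.inl '' D ∪ Sum.inr '' W) \ Sum.inl '' S) (hab : (whiskered G W).Adj a b) :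
    ReachIn G (Set.univ \ S) (Sum.elim id z a) (Sum.elim id z b) := by
  have hmaps := mapsTo_elim_attach hz hS
  have hmixed : ∀ {v w}, Sum.inl v ∈ (Sum.inl '' D ∪ Sum.inr '' W) \ Sum.inl '' S →
      Sum.inr w ∈ (Sum.inl '' D ∪ Sum.inr '' W) \ Sum.inl '' S →
      (whiskered G W).Adj (.inl v) (.inr w) → ReachIn G (Set.univ \ S) v (z w) := by
    intro v w hv hw hvw
    obtain ⟨rfl, hvW⟩ := whiskered_adj_inl_inr.mp hvw
    exact .of_adj (hmaps hv) (hmaps hw) (hz v hvW).2.2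
  rcases a with v | w <;> rcases b with v' | w'
  · exact .of_adj (hmaps ha) (hmaps hb) (whiskered_adj_inl_inl.mp hab)
  · exact hmixed ha hb hab
  · exact (hmixed hb ha hab.symm).symm
  · simpa using eq_inl_of_whiskered_adj_inr hab

end Attach

namespace HasPendantBranches

lemma exists_attach (h : HasPendantBranches G D W root) :
    ∃ z : V → V, ∀ w ∈ W, z w ∉ D ∧ root (z w) = w ∧ G.Adj w (z w) := by
  have hz : ∀ w, ∃ z, w ∈ W → z ∉ D ∧ root z = w ∧ G.Adj w z := fun w => by
    by_cases hw : w ∈ W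
    · obtain ⟨z, hz⟩ := h.exists_adj w hw
      exact ⟨z, fun _ => hz⟩
    · exact ⟨w, fun hw' => absurd hw' hw⟩
  exact ⟨fun w => (hz w).choose, fun w hw => (hz w).choose_spec hw⟩

lemma mapsTo_collapseBranches (h : HasPendantBranches G D W root) :
    Set.MapsTo (collapseBranches D root) (Set.univ \ S)
      ((Sum.inl '' D ∪ Sum.inr '' W) \ Sum.inl '' S) := fun v hv => by
  by_cases hvD : v ∈ D
  · simpa [collapseBranches_of_mem hvD, hvD] using hv.2
  · simpa [collapseBranches_of_notMem hvD] using h.root_mem v hvD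

lemma reachIn_collapseBranches_of_adj_of_notMem (h : HasPendantBranches G D W root) {a b : V}
    (ha : a ∈ Set.univ \ S) (hb : b ∈ Set.univ \ S) (hab : G.Adj a b) (haD : a ∉ D) :
    ReachIn (whiskered G W) ((Sum.inl '' D ∪ Sum.inr '' W) \ Sum.inl '' S)
      (collapseBranches D root a) (collapseBranches D root b) := by
  rcases h.adj a b hab haD with ⟨hbD, hroot⟩ | rfl
  · rw [collapseBranches_of_notMem hbD, hroot, ← collapseBranches_of_notMem haD]
    exact reachIn_refl (h.mapsTo_collapseBranches ha)
  · have hW := h.root_mem a haD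
    have hfb := h.mapsTo_collapseBranches hb
    rw [collapseBranches_of_notMem haD]
    rw [collapseBranches_of_mem (h.subset hW)] at hfb ⊢
    exact .of_adj (by simpa using hW) hfb (whiskered_adj_inl_inr.mpr ⟨rfl, hW⟩).symm

lemma reachIn_collapseBranches_of_adj (h : HasPendantBranches G D W root) {a b : V}
    (ha : a ∈ Set.univ \ S) (hb : b ∈ Set.univ \ S) (hab : G.Adj a b) :
    ReachIn (whiskered G W) ((Sum.inl '' D ∪ Sum.inr '' W) \ Sum.inl '' S)
      (collapseBranches D root a) (collapseBranches D root b) := by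
  by_cases haD : a ∈ D
  · by_cases hbD : b ∈ D
    · have hfa := h.mapsTo_collapseBranches ha
      have hfb := h.mapsTo_collapseBranches hb
      rw [collapseBranches_of_mem haD] at hfa ⊢
      rw [collapseBranches_of_mem hbD] at hfb ⊢
      exact .of_adj hfa hfb (whiskered_adj_inl_inl.mpr hab)
    · exact (h.reachIn_collapseBranches_of_adj_of_notMem hb ha hab.symm hbD).symm
  · exact h.reachIn_collapseBranches_of_adj_of_notMem ha hb hab haD

theorem cComp_whiskered_diff [Finite V] (h : HasPendantBranches G D W root) (hS : S ⊆ D) :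
    cComp (whiskered G W) ((Sum.inl '' D ∪ Sum.inr '' W) \ Sum.inl '' S) =
      cComp G (Set.univ \ S) := by
  obtain ⟨z, hz⟩ := h.exists_attach
  refine (cComp_eq_of_reachIn _ (Sum.elim id z) h.mapsTo_collapseBranches
    (mapsTo_elim_attach hz hS) (fun a ha b hb => h.reachIn_collapseBranches_of_adj ha hb)
    (fun a ha b hb => reachIn_elim_attach_of_adj hz hS ha hb) (fun a ha => ?_)
    (fun b hb => ?_)).symm
  · by_cases haD : a ∈ D
    · simpa [collapseBranches_of_mem haD] using reachIn_refl ha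
    -- `z (root a)` and `a` lie in the same connected branch, which avoids `S ⊆ D`
    obtain ⟨hzD, hzroot, -⟩ := hz (root a) (h.root_mem a haD)
    have hbranch : {v | v ∉ D ∧ root v = root a} ⊆ Set.univ \ S :=
      fun v hv => ⟨trivial, fun hvS => hv.1 (hS hvS)⟩
    simpa [collapseBranches_of_notMem haD] using
      (Preconnected.reachIn (h.preconnected _ (h.root_mem a haD)) (a := z (root a)) (b := a)
        ⟨hzD, hzroot⟩ ⟨haD, rfl⟩).mono hbranch
  · rcases b with v | w
    · have hvD : v ∈ D := by simpa using hb.1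
      simpa [collapseBranches_of_mem hvD] using reachIn_refl hb
    · obtain ⟨hzD, hzroot, -⟩ := hz w (by simpa using hb.1)
      simpa [collapseBranches_of_notMem hzD, hzroot] using reachIn_refl hb

end HasPendantBranches

end PendantBranches

section BranchDecomposition

variable {V : Type*} {G : SimpleGraph V} {B C W : Set V} {Gi : V → Set V}

structure IsBranchDecomposition (G : SimpleGraph V) (B : Set V) (Gi : V → Set V) (C : Set V) :
    Prop where
  subset : C ⊆ B
  cover : B ∪ ⋃ w ∈ C, Gi w = Set.univ
  inter_eq : ∀ w ∈ C, Gi w ∩ B = {w}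
  disjoint : ∀ w ∈ C, ∀ w' ∈ C, w ≠ w' → Gi w ∩ Gi w' = ∅
  adj : ∀ a b : V, G.Adj a b → (a ∈ B ∧ b ∈ B) ∨ ∃ w ∈ C, a ∈ Gi w ∧ b ∈ Gi w
  connected : ∀ w ∈ C, (G.induce (Gi w \ {w})).Connected

namespace IsBranchDecomposition

lemma eq_of_mem (hd : IsBranchDecomposition G B Gi C) {w w' v : V} (hw : w ∈ C) (hw' : w' ∈ C)
    (hv : v ∈ Gi w) (hv' : v ∈ Gi w') : w = w' := by
  by_contra hne
  simpa [hd.disjoint w hw w' hw' hne] using Set.mem_inter hv hv'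

lemma notMem_of_mem_diff (hd : IsBranchDecomposition G B Gi C) (hW : W ⊆ C) {w v : V}
    (hw : w ∈ W) (hv : v ∈ Gi w \ {w}) : v ∉ B ∪ ⋃ w ∈ C \ W, Gi w := by
  rintro (hvB | hvU)
  · exact hv.2 (hd.inter_eq w (hW hw) ▸ Set.mem_inter hv.1 hvB)
  · obtain ⟨w', ⟨hw'C, hw'W⟩, hvw'⟩ := Set.mem_iUnion₂.mp hvU
    exact hw'W (hd.eq_of_mem (hW hw) hw'C hv.1 hvw' ▸ hw)

lemma exists_mem_of_notMem (hd : IsBranchDecomposition G B Gi C) {v : V}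
    (hv : v ∉ B ∪ ⋃ w ∈ C \ W, Gi w) : ∃ w ∈ W, v ∈ Gi w := by
  have hvcover : v ∈ B ∪ ⋃ w ∈ C, Gi w := hd.cover ▸ Set.mem_univ v
  obtain ⟨w, hwC, hvw⟩ := Set.mem_iUnion₂.mp (hvcover.resolve_left fun hvB => hv (.inl hvB))
  by_contra! hnW
  exact hv (.inr (Set.mem_iUnion₂.mpr ⟨w, ⟨hwC, fun hwW => hnW w hwW hvw⟩, hvw⟩))

lemma exists_adj (hd : IsBranchDecomposition G B Gi C) (hconn : G.Connected) {w : V}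
    (hw : w ∈ C) : ∃ z ∈ Gi w \ {w}, G.Adj w z := by
  obtain ⟨⟨u, hu⟩⟩ := (hd.connected w hw).nonempty
  obtain ⟨d, -, hd1, hd2⟩ := (hconn.preconnected u w).some.exists_boundary_dart _ hu (by simp)
  have hd1B : d.fst ∉ B := fun hB => hd1.2 (hd.inter_eq w hw ▸ Set.mem_inter hd1.1 hB)
  rcases hd.adj _ _ d.adj with ⟨hB, -⟩ | ⟨w', hw', h1, h2⟩
  · exact absurd hB hd1B
  · obtain rfl := hd.eq_of_mem hw' hw h1 hd1.1
    have hsnd : d.snd = w' := by by_contra hne; exact hd2 ⟨h2, hne⟩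
    exact ⟨d.fst, hd1, hsnd ▸ d.adj.symm⟩

lemma setOf_root_eq (hd : IsBranchDecomposition G B Gi C) (hW : W ⊆ C) {root : V → V}
    (hroot : ∀ v ∉ B ∪ ⋃ w ∈ C \ W, Gi w, root v ∈ W ∧ v ∈ Gi (root v)) {w : V}
    (hw : w ∈ W) : {v | v ∉ B ∪ ⋃ w ∈ C \ W, Gi w ∧ root v = w} = Gi w \ {w} := by
  ext v
  constructor
  · rintro ⟨hvD, rfl⟩
    exact ⟨(hroot v hvD).2, fun hvw => hvD (.inl (hd.subset (hW (hvw ▸ hw))))⟩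
  · intro hv
    have hvD := hd.notMem_of_mem_diff hW hw hv
    exact ⟨hvD, hd.eq_of_mem (hW (hroot v hvD).1) (hW hw) (hroot v hvD).2 hv.1⟩

theorem hasPendantBranches (hd : IsBranchDecomposition G B Gi C) (hconn : G.Connected)
    (hW : W ⊆ C) {root : V → V}
    (hroot : ∀ v ∉ B ∪ ⋃ w ∈ C \ W, Gi w, root v ∈ W ∧ v ∈ Gi (root v)) :
    HasPendantBranches G (B ∪ ⋃ w ∈ C \ W, Gi w) W root where
  subset := fun w hw => .inl (hd.subset (hW hw))
  root_mem := fun v hv => (hroot v hv).1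
  exists_adj := fun w hw => by
    obtain ⟨z, hz, hwz⟩ := hd.exists_adj hconn (hW hw)
    rw [← hd.setOf_root_eq hW hroot hw] at hz
    exact ⟨z, hz.1, hz.2, hwz⟩
  preconnected := fun w hw => hd.setOf_root_eq hW hroot hw ▸ (hd.connected w (hW hw)).preconnected
  adj := fun a b hab haD => by
    obtain ⟨haW, haG⟩ := hroot a haD
    rcases hd.adj a b hab with ⟨haB, -⟩ | ⟨w', hw', haw', hbw'⟩
    · exact absurd (.inl haB) haD
    · obtain rfl := hd.eq_of_mem (hW haW) hw' haG haw'
      by_cases hb : b = root a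
      · exact .inr hb
      · have hbranch : b ∈ Gi (root a) \ {root a} := ⟨hbw', hb⟩
        rw [← hd.setOf_root_eq hW hroot haW] at hbranch
        exact .inl hbranch

lemma exists_hasPendantBranches (hd : IsBranchDecomposition G B Gi C) (hconn : G.Connected)
    (hW : W ⊆ C) : ∃ root, HasPendantBranches G (B ∪ ⋃ w ∈ C \ W, Gi w) W root := by
  have hroot : ∀ v, ∃ w, v ∉ B ∪ ⋃ w ∈ C \ W, Gi w → w ∈ W ∧ v ∈ Gi w := by
    intro v
    by_cases hv : v ∈ B ∪ ⋃ w ∈ C \ W, Gi w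
    · exact ⟨v, fun h => absurd hv h⟩
    · obtain ⟨w, hw⟩ := hd.exists_mem_of_notMem hv
      exact ⟨w, fun _ => hw⟩
  choose root hroot using hroot
  exact ⟨root, hd.hasPendantBranches hconn hW hroot⟩

end IsBranchDecomposition

end BranchDecomposition

theorem accessible_block_whiskers_general {V : Type u} [Fintype V] [DecidableEq V]
    (G : SimpleGraph V) (B : Set V) (Gi : V → Set V) (C : Set V)
    (hconn : G.Connected) (hacc : AccessibleOn G Set.univ)
    (hC : C = {w | w ∈ B ∧ CutVertexOn G Set.univ w})
    (hcover : B ∪ ⋃ w ∈ C, Gi w = Set.univ)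
    (hmeet : ∀ w ∈ C, Gi w ∩ B = {w})
    (hdisj : ∀ w ∈ C, ∀ w' ∈ C, w ≠ w' → Gi w ∩ Gi w' = ∅)
    (hedge : ∀ a b : V, G.Adj a b → (a ∈ B ∧ b ∈ B) ∨ ∃ w ∈ C, a ∈ Gi w ∧ b ∈ Gi w)
    (hbranch : ∀ w ∈ C, (G.induce (Gi w \ {w})).Connected)
    (W : Set V) (hW : W ⊆ C) :
    AccessibleOn (whiskered G W)
      (Sum.inl '' (B ∪ ⋃ w ∈ C \ W, Gi w) ∪ Sum.inr '' W) := by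
  have hd : IsBranchDecomposition G B Gi C :=
    ⟨fun w hw => (hC ▸ hw).1, hcover, hmeet, hdisj, hedge, hbranch⟩
  obtain ⟨root, hroot⟩ := hd.exists_hasPendantBranches hconn hW
  exact accessibleOn_whiskered_of_cComp_eq (fun S hS => hroot.cComp_whiskered_diff hS) hacc

/-- if `G` is a connected accessible graph, `B` a block of `G` with
cut-vertex set `C` and branch decomposition `G = B ∪ ⋃_{w ∈ C} G_w`, then for every
`W ⊆ C` the graph `B̄^W` (replace the branches at the vertices of `W` by whiskers)
is accessible; in particular `B̄ = B̄^C` is accessible. -/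
theorem accessible_block_whiskers {V : Type u} [Fintype V] [DecidableEq V]
    (G : SimpleGraph V) (B : Set V) (Gi : V → Set V) (C : Set V)
    (hconn : G.Connected) (hacc : AccessibleOn G Set.univ) (hB : IsBlock G B)
    (hC : C = {w | w ∈ B ∧ CutVertexOn G Set.univ w})
    (hcover : B ∪ ⋃ w ∈ C, Gi w = Set.univ)
    (hmeet : ∀ w ∈ C, Gi w ∩ B = {w})
    (hdisj : ∀ w ∈ C, ∀ w' ∈ C, w ≠ w' → Gi w ∩ Gi w' = ∅)
    (hedge : ∀ a b : V, G.Adj a b → (a ∈ B ∧ b ∈ B) ∨ ∃ w ∈ C, a ∈ Gi w ∧ b ∈ Gi w)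
    (hbranch : ∀ w ∈ C, (G.induce (Gi w \ {w})).Connected)
    (W : Set V) (hW : W ⊆ C) :
    AccessibleOn (whiskered G W)
      (Sum.inl '' (B ∪ ⋃ w ∈ C \ W, Gi w) ∪ Sum.inr '' W) :=
  accessible_block_whiskers_general G B Gi C hconn hacc hC hcover hmeet hdisj hedge hbranch W hW
end

section
/- Let G be a graph and v ∈ V(G) a free vertex of G. Then: (i) if N_G(v) ∉ 𝔠(G), then J_G is unmixed if and only if J_{G∖{v}} is unmixed; (ii) if G is connected, J_{G∖{v}} is unmixed, and c_G(T) = |T| + 1 for every T ∈ 𝔠(G) with N_G(v) ⊆ T, then J_G is unmixed. -/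
open SimpleGraph

universe u u'

namespace UFVAux
set_option linter.unusedSectionVars false

variable {V : Type u} [Fintype V] {G : SimpleGraph V} {A : Set V}

/-- The map on connected components induced by `A \ {z} ⊆ A`. -/
noncomputable def cmap (G : SimpleGraph V) (A : Set V) (z : V) :
    (G.induce (A \ {z})).ConnectedComponent → (G.induce A).ConnectedComponent :=
  SimpleGraph.ConnectedComponent.map
    (SimpleGraph.induceHomOfLE G (Set.diff_subset : A \ {z} ≤ A)).toHom

lemma cmap_mk (G : SimpleGraph V) (A : Set V) (z : V) (x : ↥(A \ {z})) :
    cmap G A z ((G.induce (A \ {z})).connectedComponentMk x)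
      = (G.induce A).connectedComponentMk ⟨x.1, x.2.1⟩ := rfl

/-- Walk surgery: avoid the vertex `z`. -/
lemma reach_avoid {z : V}
    (H : ∀ a y : V, a ∈ A → y ∈ A → a ≠ z → y ≠ z → G.Adj a z → G.Adj z y →
      a = y ∨ G.Adj a y) :
    ∀ (n : ℕ) (a b : ↥A) (p : (G.induce A).Walk a b), p.length ≤ n →
      ∀ (ha : (a : V) ∈ A \ {z}) (hb : (b : V) ∈ A \ {z}),
      (G.induce (A \ {z})).Reachable ⟨a, ha⟩ ⟨b, hb⟩ := by
  intro n
  induction n with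
  | zero =>
    intro a b p hp ha hb
    have hab : a = b := p.eq_of_length_eq_zero (Nat.le_zero.mp hp)
    subst hab
    exact Reachable.refl _
  | succ n ih =>
    intro a b p hp ha hb
    cases p with
    | nil => exact Reachable.refl _
    | @cons _ x _ h q =>
      by_cases hx : (x : V) = z
      · cases q with
        | nil => exact absurd hx (by simpa using hb.2)
        | @cons _ y _ h2 r =>
          have hGax : G.Adj (a : V) (x : V) := h
          have hGxy : G.Adj (x : V) (y : V) := h2
          have haz : G.Adj (a : V) z := by rwa [hx] at hGax
          have hzy : G.Adj z (y : V) := by rwa [hx] at hGxy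
          have hyz : (y : V) ≠ z := fun hh => G.irrefl (hh ▸ hzy)
          have hlen : r.length ≤ n := by
            simp only [Walk.length_cons] at hp; omega
          have hyA : (y : V) ∈ A \ {z} := ⟨y.2, hyz⟩
          have hrec := ih y b r hlen hyA hb
          rcases H (a : V) (y : V) a.2 y.2 (by simpa using ha.2) hyz haz hzy with
            heq | hadj
          · have : (⟨a, ha⟩ : ↥(A \ {z})) = ⟨y, hyA⟩ := Subtype.ext heq
            rw [this]; exact hrec
          · have e : (G.induce (A \ {z})).Adj ⟨a, ha⟩ ⟨y, hyA⟩ := hadj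
            exact e.reachable.trans hrec
      · have hxA : (x : V) ∈ A \ {z} := ⟨x.2, hx⟩
        have e : (G.induce (A \ {z})).Adj ⟨a, ha⟩ ⟨x, hxA⟩ := h
        have hlen : q.length ≤ n := by
          simp only [Walk.length_cons] at hp; omega
        exact e.reachable.trans (ih x b q hlen hxA hb)

lemma reach_avoid' {z : V}
    (H : ∀ a y : V, a ∈ A → y ∈ A → a ≠ z → y ≠ z → G.Adj a z → G.Adj z y →
      a = y ∨ G.Adj a y)
    {a b : V} (ha : a ∈ A \ {z}) (hb : b ∈ A \ {z})
    (hr : (G.induce A).Reachable ⟨a, ha.1⟩ ⟨b, hb.1⟩) :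
    (G.induce (A \ {z})).Reachable ⟨a, ha⟩ ⟨b, hb⟩ := by
  obtain ⟨p⟩ := hr
  exact reach_avoid H p.length _ _ p le_rfl ha hb

lemma cmap_inj {z : V}
    (H : ∀ a y : V, a ∈ A → y ∈ A → a ≠ z → y ≠ z → G.Adj a z → G.Adj z y →
      a = y ∨ G.Adj a y) :
    Function.Injective (cmap G A z) := by
  intro c d
  refine ConnectedComponent.ind₂ (fun x y hxy => ?_) c d
  rw [cmap_mk, cmap_mk, ConnectedComponent.eq] at hxy
  rw [ConnectedComponent.eq]
  have := reach_avoid' H x.2 y.2 hxy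
  simpa using this

lemma eq_of_reach_isolated {z : V} (hz : z ∈ A) (hiso : ∀ w ∈ A, ¬ G.Adj z w)
    {u : ↥A} (h : (G.induce A).Reachable ⟨z, hz⟩ u) : (u : V) = z := by
  obtain ⟨p⟩ := h
  cases p with
  | nil => rfl
  | @cons _ x _ h q =>
    exact absurd (h : G.Adj z (x : V)) (hiso _ x.2)

/-- Removing a simplicial vertex with a neighbour keeps the component count. -/
lemma cComp_erase_free {v w : V} (hfree : FreeVertex G v) (hv : v ∈ A) (hw : w ∈ A)
    (hadj : G.Adj v w) : cComp G A = cComp G (A \ {v}) := by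
  have H : ∀ a y : V, a ∈ A → y ∈ A → a ≠ v → y ≠ v → G.Adj a v → G.Adj v y →
      a = y ∨ G.Adj a y := by
    intro a y _ _ _ _ hav hvy
    by_cases hay : a = y
    · exact Or.inl hay
    · exact Or.inr (hfree a y hav.symm hvy hay)
  have hinj := cmap_inj (G := G) (A := A) (z := v) H
  have hsurj : Function.Surjective (cmap G A v) := by
    refine ConnectedComponent.ind (fun a => ?_)
    by_cases h : (a : V) = v
    · refine ⟨(G.induce (A \ {v})).connectedComponentMk ⟨w, ⟨hw, hadj.ne'⟩⟩, ?_⟩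
      rw [cmap_mk, ConnectedComponent.eq]
      have : a = (⟨v, hv⟩ : ↥A) := Subtype.ext h
      rw [this]
      exact ((G.induce A).adj_symm (by exact hadj : (G.induce A).Adj ⟨v, hv⟩ ⟨w, hw⟩)).reachable
    · refine ⟨(G.induce (A \ {v})).connectedComponentMk ⟨a, ⟨a.2, h⟩⟩, ?_⟩
      rw [cmap_mk]
  have := Nat.card_eq_of_bijective _ ⟨hinj, hsurj⟩
  exact this.symm

/-- Removing an isolated vertex drops the component count by one. -/
lemma cComp_erase_isolated {z : V} (hz : z ∈ A) (hiso : ∀ w ∈ A, ¬ G.Adj z w) :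
    cComp G A = cComp G (A \ {z}) + 1 := by
  have H : ∀ a y : V, a ∈ A → y ∈ A → a ≠ z → y ≠ z → G.Adj a z → G.Adj z y →
      a = y ∨ G.Adj a y := by
    intro a y ha _ _ _ haz _
    exact absurd haz.symm (hiso a ha)
  have hinj := cmap_inj (G := G) (A := A) (z := z) H
  have hnr : ∀ x : ↥(A \ {z}),
      cmap G A z ((G.induce (A \ {z})).connectedComponentMk x)
        ≠ (G.induce A).connectedComponentMk ⟨z, hz⟩ := by
    intro x hx
    rw [cmap_mk, ConnectedComponent.eq] at hx
    exact (by simpa using x.2.2 : (x : V) ≠ z)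
      (eq_of_reach_isolated hz hiso hx.symm)
  set f : Option ((G.induce (A \ {z})).ConnectedComponent) →
      (G.induce A).ConnectedComponent :=
    fun o => o.elim ((G.induce A).connectedComponentMk ⟨z, hz⟩) (cmap G A z) with hf
  have hbij : Function.Bijective f := by
    constructor
    · rintro (_|c) (_|d) h
      · rfl
      · exfalso; obtain ⟨x, rfl⟩ := d.exists_rep; exact hnr x h.symm
      · exfalso; obtain ⟨x, rfl⟩ := c.exists_rep; exact hnr x h
      · exact congrArg some (hinj h)
    · refine ConnectedComponent.ind (fun a => ?_)
      by_cases h : (a : V) = z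
      · refine ⟨none, ?_⟩
        have ha : a = (⟨z, hz⟩ : ↥A) := Subtype.ext h
        rw [ha]; rfl
      · refine ⟨some ((G.induce (A \ {z})).connectedComponentMk ⟨a, ⟨a.2, h⟩⟩), ?_⟩
        show cmap G A z _ = _
        rw [cmap_mk]
  have hcard := Nat.card_eq_of_bijective _ hbij
  rw [Finite.card_option] at hcard
  unfold cComp
  omega

lemma nat_card_lt_of_surj_not_inj {α β : Type u} [Finite α] (f : α → β)
    (hs : Function.Surjective f) (hn : ¬ Function.Injective f) :
    Nat.card β < Nat.card α := by
  have hb : Finite β := Finite.of_surjective f hs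
  cases nonempty_fintype α
  cases nonempty_fintype β
  simpa [Nat.card_eq_fintype_card] using
    Fintype.card_lt_of_surjective_not_injective f hs hn

/-- A pendant vertex's unique support is not a cut vertex when it has no other
neighbours. -/
lemma not_cutVertex_pendant {v t : V} (hv : v ∈ A) (ht : t ∈ A) (hvt : G.Adj v t)
    (hvp : ∀ w ∈ A, G.Adj v w → w = t) (htp : ∀ w ∈ A, G.Adj t w → w = v) :
    ¬ CutVertexOn G A t := by
  intro hcut
  have H : ∀ a y : V, a ∈ A → y ∈ A → a ≠ t → y ≠ t → G.Adj a t → G.Adj t y →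
      a = y ∨ G.Adj a y := by
    intro a y ha hy _ _ hat hty
    have h1 : a = v := htp a ha hat.symm
    have h2 : y = v := htp y hy hty
    exact Or.inl (h1.trans h2.symm)
  have hinj := cmap_inj (G := G) (A := A) (z := t) H
  have hle := Nat.card_le_card_of_injective _ hinj
  exact absurd hcut.2 (not_lt.mpr hle)

/-- A pendant vertex's support is a cut vertex when it has another neighbour. -/
lemma cutVertex_pendant {v t w : V} (hv : v ∈ A) (ht : t ∈ A) (hw : w ∈ A)
    (hvt : G.Adj v t) (hvp : ∀ u ∈ A, G.Adj v u → u = t)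
    (htw : G.Adj t w) (hwv : w ≠ v) : CutVertexOn G A t := by
  refine ⟨ht, ?_⟩
  have hvt' : v ≠ t := hvt.ne
  have hwt' : w ≠ t := htw.ne'
  have hsurj : Function.Surjective (cmap G A t) := by
    refine ConnectedComponent.ind (fun a => ?_)
    by_cases h : (a : V) = t
    · refine ⟨(G.induce (A \ {t})).connectedComponentMk ⟨v, ⟨hv, hvt'⟩⟩, ?_⟩
      rw [cmap_mk, ConnectedComponent.eq]
      have : a = (⟨t, ht⟩ : ↥A) := Subtype.ext h
      rw [this]
      exact (by exact hvt : (G.induce A).Adj ⟨v, hv⟩ ⟨t, ht⟩).reachable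
    · refine ⟨(G.induce (A \ {t})).connectedComponentMk ⟨a, ⟨a.2, h⟩⟩, ?_⟩
      rw [cmap_mk]
  have hninj : ¬ Function.Injective (cmap G A t) := by
    intro hinj
    have hiso : ∀ u ∈ A \ {t}, ¬ G.Adj v u := by
      intro u hu hadj
      exact (by simpa using hu.2 : u ≠ t) (hvp u hu.1 hadj)
    have heq : cmap G A t ((G.induce (A \ {t})).connectedComponentMk ⟨v, ⟨hv, hvt'⟩⟩)
        = cmap G A t ((G.induce (A \ {t})).connectedComponentMk ⟨w, ⟨hw, hwt'⟩⟩) := by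
      rw [cmap_mk, cmap_mk, ConnectedComponent.eq]
      exact ((by exact hvt : (G.induce A).Adj ⟨v, hv⟩ ⟨t, ht⟩).reachable).trans
        ((by exact htw : (G.induce A).Adj ⟨t, ht⟩ ⟨w, hw⟩).reachable)
    have := hinj heq
    rw [ConnectedComponent.eq] at this
    exact hwv (eq_of_reach_isolated (A := A \ {t}) ⟨hv, hvt'⟩ hiso this)
  exact nat_card_lt_of_surj_not_inj _ hsurj hninj

/-- A cut vertex has a neighbour in the ambient set. -/
lemma exists_adj_of_cutVertex {t : V} (h : CutVertexOn G A t) :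
    ∃ w ∈ A, G.Adj t w := by
  by_contra hno
  push_neg at hno
  have := cComp_erase_isolated h.1 hno
  have h2 := h.2
  omega

lemma cComp_univ_connected (h : G.Connected) : cComp G Set.univ = 1 := by
  have hco : (G.induce Set.univ).Connected := (Iso.connected_iff (induceUnivIso G)).mpr h
  haveI := hco.preconnected.subsingleton_connectedComponent
  haveI : Nonempty (G.induce Set.univ).ConnectedComponent := by
    obtain ⟨a⟩ := h.nonempty
    exact ⟨(G.induce Set.univ).connectedComponentMk ⟨a, Set.mem_univ a⟩⟩
  exact Nat.card_unique


section Cutsets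

variable [DecidableEq V] {v : V}

lemma compl_diff (v : V) (S : Set V) :
    (({v}ᶜ : Set V)) \ S = (Set.univ \ S) \ {v} := by
  ext x; simp; tauto

lemma free_not_mem_cutset (hfree : FreeVertex G v) {T : Finset V}
    (hT : CutsetOn G Set.univ T) : v ∉ T := by
  intro hvT
  have hcut := hT.2 v hvT
  have hvA : v ∈ Set.univ \ (↑(T.erase v) : Set V) := by simp
  by_cases hnb : ∃ w ∈ Set.univ \ (↑(T.erase v) : Set V), G.Adj v w
  · obtain ⟨w, hwA, hw⟩ := hnb
    have h1 := cComp_erase_free hfree hvA hwA hw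
    have h2 := hcut.2
    omega
  · push_neg at hnb
    have h1 := cComp_erase_isolated hvA hnb
    have h2 := hcut.2
    omega

lemma cutVertexOn_diff_v_iff (hfree : FreeVertex G v) {B : Set V} {t w : V}
    (hvB : v ∈ B) (hwB : w ∈ B) (htv : t ≠ v) (hwt : w ≠ t) (hadj : G.Adj v w) :
    CutVertexOn G B t ↔ CutVertexOn G (B \ {v}) t := by
  have h1 : cComp G B = cComp G (B \ {v}) := cComp_erase_free hfree hvB hwB hadj
  have h2 : cComp G (B \ {t}) = cComp G ((B \ {t}) \ {v}) :=
    cComp_erase_free hfree ⟨hvB, fun hh => htv (Set.mem_singleton_iff.mp hh).symm⟩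
      ⟨hwB, fun hh => hwt (Set.mem_singleton_iff.mp hh)⟩ hadj
  have h3 : cComp G ((B \ {t}) \ {v}) = cComp G ((B \ {v}) \ {t}) := by
    rw [Set.diff_diff_comm]
  unfold CutVertexOn
  constructor
  · rintro ⟨hm, hlt⟩
    exact ⟨⟨hm, fun hh => htv (Set.mem_singleton_iff.mp hh)⟩, by omega⟩
  · rintro ⟨hm, hlt⟩
    exact ⟨hm.1, by omega⟩

lemma cutsetOn_transfer (hfree : FreeVertex G v) {T : Finset V} (hvT : v ∉ T)
    {w : V} (hadj : G.Adj v w) (hwT : w ∉ T) :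
    CutsetOn G Set.univ T ↔ CutsetOn G ({v}ᶜ : Set V) T := by
  have hTsub : (↑T : Set V) ⊆ ({v}ᶜ : Set V) := by
    intro x hx
    simp only [Set.mem_compl_iff, Set.mem_singleton_iff]
    rintro rfl
    exact hvT (by exact_mod_cast hx)
  have key : ∀ t ∈ T, (CutVertexOn G (Set.univ \ (↑(T.erase t) : Set V)) t ↔
      CutVertexOn G ((Set.univ \ (↑(T.erase t) : Set V)) \ {v}) t) := by
    intro t htT
    refine cutVertexOn_diff_v_iff hfree ?_ ?_ ?_ ?_ hadj
    · exact ⟨trivial, fun hh => hvT (Finset.mem_of_mem_erase (by exact_mod_cast hh))⟩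
    · exact ⟨trivial, fun hh => hwT (Finset.mem_of_mem_erase (by exact_mod_cast hh))⟩
    · rintro rfl; exact hvT htT
    · rintro rfl; exact hwT htT
  constructor
  · rintro ⟨-, h⟩
    refine ⟨hTsub, fun t htT => ?_⟩
    rw [compl_diff]
    exact (key t htT).mp (h t htT)
  · rintro ⟨-, h⟩
    refine ⟨Set.subset_univ _, fun t htT => ?_⟩
    have := h t htT
    rw [compl_diff] at this
    exact (key t htT).mpr this

lemma cComp_diff_transfer (hfree : FreeVertex G v) {S : Set V} (hvS : v ∉ S)
    {w : V} (hadj : G.Adj v w) (hwS : w ∉ S) :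
    cComp G (Set.univ \ S) = cComp G (({v}ᶜ : Set V) \ S) := by
  rw [compl_diff]
  exact cComp_erase_free hfree ⟨trivial, hvS⟩ ⟨trivial, hwS⟩ hadj

lemma cComp_univ_eq_compl (hfree : FreeVertex G v) {w : V} (hadj : G.Adj v w) :
    cComp G Set.univ = cComp G ({v}ᶜ : Set V) := by
  have h := cComp_erase_free (A := Set.univ) hfree trivial trivial hadj
  rwa [show Set.univ \ {v} = ({v}ᶜ : Set V) by ext x; simp] at h

lemma nbhd_cutset (hfree : FreeVertex G v) (N : Finset V)
    (hN : (↑N : Set V) = G.neighborSet v)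
    (hwit : ∀ t ∈ N, ∃ w, w ∉ N.erase t ∧ w ≠ v ∧ G.Adj t w) :
    CutsetOn G Set.univ N := by
  have hmemN : ∀ t : V, t ∈ N ↔ G.Adj v t := by
    intro t
    constructor
    · intro ht
      have : (t : V) ∈ (↑N : Set V) := ht
      rw [hN] at this; exact this
    · intro ht
      have : t ∈ G.neighborSet v := ht
      rw [← hN] at this; exact_mod_cast this
  refine ⟨Set.subset_univ _, fun t htN => ?_⟩
  obtain ⟨w, hw1, hw2, hw3⟩ := hwit t htN
  have hvt : G.Adj v t := (hmemN t).mp htN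
  refine cutVertex_pendant (v := v) (w := w) ?_ ?_ ?_ hvt ?_ hw3 hw2
  · exact ⟨trivial, fun hh => G.irrefl ((hmemN v).mp
      (Finset.mem_of_mem_erase (by exact_mod_cast hh)))⟩
  · exact ⟨trivial, fun hh => (Finset.notMem_erase t N) (by exact_mod_cast hh)⟩
  · exact ⟨trivial, fun hh => hw1 (by exact_mod_cast hh)⟩
  · intro u hu hadj
    have huN : u ∈ N := (hmemN u).mpr hadj
    by_contra hne
    exact hu.2 (by exact_mod_cast Finset.mem_erase.mpr ⟨hne, huN⟩)

lemma witness_univ (hfree : FreeVertex G v) {T : Finset V}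
    (hT : CutsetOn G Set.univ T) (hsub : G.neighborSet v ⊆ (↑T : Set V))
    {t : V} (htT : t ∈ T) (htn : G.Adj v t) :
    ∃ w, w ∉ T.erase t ∧ w ≠ v ∧ G.Adj t w := by
  by_contra hno
  push_neg at hno
  have hvT : v ∉ T := free_not_mem_cutset hfree hT
  refine not_cutVertex_pendant (v := v) ?_ ?_ htn ?_ ?_ (hT.2 t htT)
  · exact ⟨trivial, fun hh => hvT (Finset.mem_of_mem_erase (by exact_mod_cast hh))⟩
  · exact ⟨trivial, fun hh => (Finset.notMem_erase t T) (by exact_mod_cast hh)⟩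
  · intro u hu hadj
    have huT : u ∈ T := by exact_mod_cast hsub (hadj : u ∈ G.neighborSet v)
    by_contra hne
    exact hu.2 (by exact_mod_cast Finset.mem_erase.mpr ⟨hne, huT⟩)
  · intro u hu hadj
    by_contra hne
    exact hno u (fun hh => hu.2 (by exact_mod_cast hh)) hne hadj

lemma witness_compl {T : Finset V} (hT : CutsetOn G ({v}ᶜ : Set V) T) {t : V}
    (htT : t ∈ T) : ∃ w, w ∉ T.erase t ∧ w ≠ v ∧ G.Adj t w := by
  obtain ⟨w, hwB, hadj⟩ := exists_adj_of_cutVertex (hT.2 t htT)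
  refine ⟨w, fun h => hwB.2 (by exact_mod_cast h), fun h => hwB.1 (by simp [h]), hadj⟩

end Cutsets

end UFVAux


/-- let `v` be a free vertex of `G`. (i) If `N_G(v) ∉ 𝔠(G)` then `J_G`
is unmixed iff `J_{G∖{v}}` is unmixed. (ii) If `G` is connected, `J_{G∖{v}}` is
unmixed and `c_G(T) = |T| + 1` for every cutset `T ⊇ N_G(v)`, then `J_G` is unmixed. -/
theorem unmixed_free_vertex {V : Type u} [Fintype V] [DecidableEq V]
    (G : SimpleGraph V) (v : V) (hfree : FreeVertex G v) :
    (∀ N : Finset V, (↑N : Set V) = G.neighborSet v → ¬ CutsetOn G Set.univ N →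
       (UnmixedOn G Set.univ ↔ UnmixedOn G ({v}ᶜ : Set V))) ∧
    (G.Connected → UnmixedOn G ({v}ᶜ : Set V) →
       (∀ T : Finset V, CutsetOn G Set.univ T → G.neighborSet v ⊆ ↑T →
          cComp G (Set.univ \ ↑T) = T.card + 1) →
       UnmixedOn G Set.univ) := by
  constructor
  · intro N hN hNc
    have hmemN : ∀ t : V, t ∈ N ↔ G.Adj v t := by
      intro t
      constructor
      · intro ht
        have h : (t : V) ∈ (↑N : Set V) := ht
        rw [hN] at h; exact h
      · intro ht
        have h : t ∈ G.neighborSet v := ht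
        rw [← hN] at h; exact_mod_cast h
    have hex : ∃ w, G.Adj v w := by
      by_contra hno
      push_neg at hno
      apply hNc
      refine ⟨Set.subset_univ _, fun t ht => ?_⟩
      exact absurd ((hmemN t).mp ht) (hno t)
    obtain ⟨w₀, hw₀⟩ := hex
    have hcc : cComp G Set.univ = cComp G ({v}ᶜ : Set V) :=
      UFVAux.cComp_univ_eq_compl hfree hw₀
    constructor
    · -- unmixed on G implies unmixed on G ∖ v
      intro U T hT
      have hvT : v ∉ T := fun h => by
        simpa using hT.1 (Finset.mem_coe.mpr h)
      by_cases hcase : ∃ w, G.Adj v w ∧ w ∉ T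
      · obtain ⟨w, hw, hwT⟩ := hcase
        have hTu : CutsetOn G Set.univ T :=
          (UFVAux.cutsetOn_transfer hfree hvT hw hwT).mpr hT
        have h1 := U T hTu
        have h2 : cComp G (Set.univ \ (↑T : Set V)) = cComp G (({v}ᶜ : Set V) \ ↑T) :=
          UFVAux.cComp_diff_transfer hfree (by exact_mod_cast hvT) hw
            (by exact_mod_cast hwT)
        omega
      · push_neg at hcase
        exfalso
        apply hNc
        apply UFVAux.nbhd_cutset hfree N hN
        intro t htN
        have htn : G.Adj v t := (hmemN t).mp htN
        have htT : t ∈ T := hcase t htn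
        have hNT : N ⊆ T := fun u hu => hcase u ((hmemN u).mp hu)
        obtain ⟨w, hw1, hw2, hw3⟩ := UFVAux.witness_compl hT htT
        exact ⟨w, fun hmem => hw1 (Finset.erase_subset_erase t hNT hmem), hw2, hw3⟩
    · -- unmixed on G ∖ v implies unmixed on G
      intro U' T hT
      have hvT : v ∉ T := UFVAux.free_not_mem_cutset hfree hT
      by_cases hcase : ∃ w, G.Adj v w ∧ w ∉ T
      · obtain ⟨w, hw, hwT⟩ := hcase
        have hTc : CutsetOn G ({v}ᶜ : Set V) T :=
          (UFVAux.cutsetOn_transfer hfree hvT hw hwT).mp hT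
        have h1 := U' T hTc
        have h2 : cComp G (Set.univ \ (↑T : Set V)) = cComp G (({v}ᶜ : Set V) \ ↑T) :=
          UFVAux.cComp_diff_transfer hfree (by exact_mod_cast hvT) hw
            (by exact_mod_cast hwT)
        omega
      · push_neg at hcase
        exfalso
        apply hNc
        apply UFVAux.nbhd_cutset hfree N hN
        intro t htN
        have htn : G.Adj v t := (hmemN t).mp htN
        have htT : t ∈ T := hcase t htn
        have hNT : N ⊆ T := fun u hu => hcase u ((hmemN u).mp hu)
        have hsub : G.neighborSet v ⊆ (↑T : Set V) := by
          intro u hu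
          exact_mod_cast hcase u hu
        obtain ⟨w, hw1, hw2, hw3⟩ := UFVAux.witness_univ hfree hT hsub htT htn
        exact ⟨w, fun hmem => hw1 (Finset.erase_subset_erase t hNT hmem), hw2, hw3⟩
  · intro hconn U' H T hT
    have hvT : v ∉ T := UFVAux.free_not_mem_cutset hfree hT
    have hone : cComp G Set.univ = 1 := UFVAux.cComp_univ_connected hconn
    by_cases hcase : ∃ w, G.Adj v w ∧ w ∉ T
    · obtain ⟨w, hw, hwT⟩ := hcase
      have hTc : CutsetOn G ({v}ᶜ : Set V) T :=
        (UFVAux.cutsetOn_transfer hfree hvT hw hwT).mp hT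
      have h1 := U' T hTc
      have h2 : cComp G (Set.univ \ (↑T : Set V)) = cComp G (({v}ᶜ : Set V) \ ↑T) :=
        UFVAux.cComp_diff_transfer hfree (by exact_mod_cast hvT) hw
          (by exact_mod_cast hwT)
      have hcc : cComp G Set.univ = cComp G ({v}ᶜ : Set V) :=
        UFVAux.cComp_univ_eq_compl hfree hw
      omega
    · push_neg at hcase
      have hsub : G.neighborSet v ⊆ (↑T : Set V) := by
        intro u hu
        exact_mod_cast hcase u hu
      have h1 := H T hT hsub
      omega
end

section
/- Let G be a graph and v ∈ V(G) a free vertex of G. If J_G is strongly unmixed and there exists no cutset T ∈ 𝔠(G) with N_G(v) ⊆ T, then J_{G∖{v}} is strongly unmixed. -/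
open SimpleGraph

universe u u'

/-!
Induct on the derivation of `StronglyUnmixedOn G A`. A free vertex `v` is never a cut vertex,
and deleting it from an induced subgraph that contains one of its neighbours does not change
the number of components, since every path through `v` can jump between two neighbours of `v`.
Some cutset contains `N(v)` exactly when every neighbour of `v` has a neighbour outside `N[v]`
(`NeighborsEscapeOn`); this form of the hypothesis passes from `G[A]` to `G[A] ∖ x`, `(G[A])_x`
and `(G[A])_x ∖ x` for the cut vertex `x` of the derivation, and it forces `v` to have a
neighbour other than `x`. Hence `x` stays a cut vertex of `G[A] ∖ v` and the induction
hypothesis applies to the three graphs. Finally `G[A] ∖ v` is unmixed: a cutset of it containing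
`N(v)` would make the neighbours of `v` escape, and one missing a neighbour of `v` is a cutset
of `G[A]` with the same component counts.
-/

open Function

section Components

variable {V : Type u} (G : SimpleGraph V) {S S' B : Set V} {a b c u v w : V}

def AdjOn (S : Set V) (a b : V) : Prop := a ∈ S ∧ b ∈ S ∧ G.Adj a b

/-- Reachability in `G.induce S`, stated for vertices of `V`; it holds trivially when
`a = b ∉ S`. -/
def ChainOn (S : Set V) : V → V → Prop := Relation.ReflTransGen (AdjOn G S)

variable {G}

theorem ChainOn.symm (h : ChainOn G S a b) : ChainOn G S b a := by
  induction h with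
  | refl => exact .refl
  | tail _ hbc ih => exact .head ⟨hbc.2.1, hbc.1, hbc.2.2.symm⟩ ih

theorem ChainOn.mono (hS : S ⊆ S') (h : ChainOn G S a b) : ChainOn G S' a b :=
  Relation.ReflTransGen.mono (fun _ _ hab => ⟨hS hab.1, hS hab.2.1, hab.2.2⟩) _ _ h

theorem ChainOn.eq_of_isolated (hiso : ∀ c ∈ S, ¬ G.Adj a c) (h : ChainOn G S a b) : a = b := by
  rcases h.cases_head with h | ⟨c, hac, _⟩
  exacts [h, absurd hac.2.2 (hiso c hac.2.1)]

theorem reachable_induce_iff_chainOn (p q : S) : (G.induce S).Reachable p q ↔ ChainOn G S p q := by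
  refine ⟨fun h => ?_, fun h => ?_⟩
  · exact Relation.ReflTransGen.lift Subtype.val (fun x y hxy => ⟨x.2, y.2, hxy⟩) _ _
      ((reachable_iff_reflTransGen p q).mp h)
  · obtain ⟨q, hq⟩ := q
    change ChainOn G S p q at h
    induction h with
    | refl => rfl
    | tail _ hcd ih => exact (ih hcd.1).trans (Adj.reachable (G := G.induce S) hcd.2.2)

theorem connectedComponentMk_eq_iff_chainOn (p q : S) :
    (G.induce S).connectedComponentMk p = (G.induce S).connectedComponentMk q ↔
      ChainOn G S p q := by
  rw [ConnectedComponent.eq, reachable_induce_iff_chainOn]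

variable (G) in
def componentInclusion (hS : S ⊆ S') :
    (G.induce S).ConnectedComponent → (G.induce S').ConnectedComponent :=
  ConnectedComponent.map (G.induceHomOfLE hS).toHom

theorem componentInclusion_mk (hS : S ⊆ S') (p : S) :
    componentInclusion G hS ((G.induce S).connectedComponentMk p) =
      (G.induce S').connectedComponentMk (Set.inclusion hS p) :=
  rfl

theorem componentInclusion_injective (hS : S ⊆ S')
    (h : ∀ a ∈ S, ∀ b ∈ S, ChainOn G S' a b → ChainOn G S a b) :
    Injective (componentInclusion G hS) := by
  intro c d
  induction c using ConnectedComponent.ind with | h p =>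
  induction d using ConnectedComponent.ind with | h q =>
  simp only [componentInclusion_mk, connectedComponentMk_eq_iff_chainOn]
  exact h p p.2 q q.2

theorem componentInclusion_surjective (hS : S ⊆ S')
    (h : ∀ a ∈ S', ∃ b ∈ S, ChainOn G S' a b) :
    Surjective (componentInclusion G hS) := by
  intro c
  induction c using ConnectedComponent.ind with | h p =>
  obtain ⟨b, hb, hpb⟩ := h p p.2
  refine ⟨(G.induce S).connectedComponentMk ⟨b, hb⟩, ?_⟩
  rw [componentInclusion_mk, connectedComponentMk_eq_iff_chainOn]
  exact hpb.symm

theorem cComp_le_of_chainOn [Finite V] (hS : S ⊆ S')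
    (h : ∀ a ∈ S, ∀ b ∈ S, ChainOn G S' a b → ChainOn G S a b) :
    cComp G S ≤ cComp G S' :=
  Nat.card_le_card_of_injective _ (componentInclusion_injective hS h)

theorem ChainOn.diff_singleton_of_hub (hhub : ∀ w ∈ S, G.Adj u w → ChainOn G (S \ {u}) c w)
    (h : ChainOn G S a b) (ha : a ≠ u) (hb : b ≠ u) : ChainOn G (S \ {u}) a b := by
  suffices ∀ a, ChainOn G S a b →
      (a ≠ u → ChainOn G (S \ {u}) a b) ∧ (a = u → ChainOn G (S \ {u}) c b) from
    (this a h).1 ha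
  intro a h
  refine Relation.ReflTransGen.head_induction_on h ⟨fun _ => .refl, fun hbu => absurd hbu hb⟩ ?_
  rintro p d hpd - ⟨ihd, ihu⟩
  constructor
  · intro hpu
    by_cases hdu : d = u
    · subst hdu
      exact (hhub p hpd.1 hpd.2.2.symm).symm.trans (ihu rfl)
    · exact .head ⟨⟨hpd.1, hpu⟩, ⟨hpd.2.1, hdu⟩, hpd.2.2⟩ (ihd hdu)
  · intro hpu
    have hud : G.Adj u d := hpu ▸ hpd.2.2
    exact (hhub d hpd.2.1 hud).trans (ihd hud.ne')

theorem CutVertexOn.exists_adj_not_chainOn [Finite V] (hu : CutVertexOn G B u) (c : V) :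
    ∃ w ∈ B, w ≠ u ∧ G.Adj u w ∧ ¬ ChainOn G (B \ {u}) c w := by
  by_contra! hall
  refine hu.2.not_ge (cComp_le_of_chainOn Set.sdiff_subset fun _ ha _ hb hab => ?_)
  exact hab.diff_singleton_of_hub (fun w hw huw => hall w hw huw.ne' huw) ha.2 hb.2

theorem cutVertexOn_of_not_chainOn [Finite V] (hu : u ∈ B) (hv : v ∈ B \ {u}) (hw : w ∈ B \ {u})
    (huv : G.Adj u v) (huw : G.Adj u w) (hvw : ¬ ChainOn G (B \ {u}) v w) :
    CutVertexOn G B u := by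
  have hsurj : Surjective (componentInclusion G (Set.sdiff_subset : B \ {u} ⊆ B)) :=
    componentInclusion_surjective _ fun a ha => by
      by_cases hau : a = u
      · exact ⟨v, hv, .single ⟨ha, hv.1, hau ▸ huv⟩⟩
      · exact ⟨a, ⟨ha, hau⟩, .refl⟩
  have hnotinj : ¬ Injective (componentInclusion G (Set.sdiff_subset : B \ {u} ⊆ B)) := by
    intro hinj
    refine hvw ((connectedComponentMk_eq_iff_chainOn (S := B \ {u}) ⟨v, hv⟩ ⟨w, hw⟩).mp
      (hinj ?_))
    rw [componentInclusion_mk, componentInclusion_mk, connectedComponentMk_eq_iff_chainOn]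
    exact .head ⟨hv.1, hu, huv.symm⟩ (.single ⟨hu, hw.1, huw⟩)
  exact ⟨hu, lt_of_not_ge fun hle => hnotinj (hsurj.bijective_of_nat_card_le hle).1⟩

end Components

section FreeVertices

variable {V : Type u} {G : SimpleGraph V} {S S' : Set V} {a b v x y : V}

def IsFreeOn (G : SimpleGraph V) (S : Set V) (v : V) : Prop :=
  ∀ a ∈ S, ∀ b ∈ S, G.Adj v a → G.Adj v b → a ≠ b → G.Adj a b

theorem IsFreeOn.mono (h : IsFreeOn G S v) (hS : S' ⊆ S) : IsFreeOn G S' v :=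
  fun a ha b hb => h a (hS ha) b (hS hb)

theorem ChainOn.diff_singleton_of_isFreeOn (hfree : IsFreeOn G S v) (h : ChainOn G S a b)
    (ha : a ≠ v) (hb : b ≠ v) : ChainOn G (S \ {v}) a b := by
  by_cases hc : ∃ c ∈ S, G.Adj v c
  · obtain ⟨c, hcS, hvc⟩ := hc
    refine h.diff_singleton_of_hub (c := c) (fun w hwS hvw => ?_) ha hb
    by_cases hcw : c = w
    · exact hcw ▸ .refl
    · exact .single ⟨⟨hcS, hvc.ne'⟩, ⟨hwS, hvw.ne'⟩, hfree c hcS w hwS hvc hvw hcw⟩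
  · push Not at hc
    exact h.diff_singleton_of_hub (c := a) (fun w hwS hvw => absurd hvw (hc w hwS)) ha hb

theorem cComp_diff_free_eq (hfree : IsFreeOn G S v) (hy : y ∈ S) (hvy : G.Adj v y) :
    cComp G (S \ {v}) = cComp G S := by
  refine Nat.card_eq_of_bijective _ ⟨componentInclusion_injective Set.sdiff_subset
    fun _ ha _ hb hab => hab.diff_singleton_of_isFreeOn hfree ha.2 hb.2,
    componentInclusion_surjective Set.sdiff_subset fun a ha => ?_⟩
  by_cases hav : a = v
  · exact ⟨y, ⟨hy, hvy.ne'⟩, .single ⟨ha, hy, hav ▸ hvy⟩⟩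
  · exact ⟨a, ⟨ha, hav⟩, .refl⟩

theorem cutVertexOn_diff_free_iff (hfree : IsFreeOn G S v) (hy : y ∈ S)
    (hvy : G.Adj v y) (hxv : x ≠ v) (hxy : x ≠ y) :
    CutVertexOn G (S \ {v}) x ↔ CutVertexOn G S x := by
  have hx : x ∈ S \ {v} ↔ x ∈ S := ⟨fun h => h.1, fun h => ⟨h, hxv⟩⟩
  rw [CutVertexOn, CutVertexOn, Set.sdiff_sdiff_comm, cComp_diff_free_eq hfree hy hvy,
    cComp_diff_free_eq (hfree.mono Set.sdiff_subset) ⟨hy, hxy.symm⟩ hvy, hx]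

variable [Finite V]

theorem not_cutVertexOn_of_isFreeOn (hfree : IsFreeOn G S v) : ¬ CutVertexOn G S v :=
  fun hv => hv.2.not_ge <| cComp_le_of_chainOn Set.sdiff_subset
    fun _ ha _ hb hab => hab.diff_singleton_of_isFreeOn hfree ha.2 hb.2

end FreeVertices

section Escape

variable {V : Type u} {G : SimpleGraph V} {A : Set V} {v x : V}

def NeighborsEscapeOn (G : SimpleGraph V) (A : Set V) (v : V) : Prop :=
  ∀ u ∈ A, G.Adj v u → ∃ w ∈ A, w ≠ v ∧ ¬ G.Adj v w ∧ G.Adj u w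

theorem NeighborsEscapeOn.of_diff_self (h : NeighborsEscapeOn G (A \ {v}) v) :
    NeighborsEscapeOn G A v := fun u huA hvu =>
  let ⟨w, hw, hwv, hvw, huw⟩ := h u ⟨huA, hvu.ne'⟩ hvu
  ⟨w, hw.1, hwv, hvw, huw⟩

/-- The neighbour `x` of `v` escapes through the side of the cut at `x` not containing `v`. -/
theorem neighborsEscapeOn_of_cutVertexOn [Finite V] (hx : CutVertexOn G A x)
    (hv : v ∈ A) (hvx : v ≠ x)
    (h : ∀ u ∈ A, u ≠ x → G.Adj v u → ∃ w ∈ A, w ≠ v ∧ ¬ G.Adj v w ∧ G.Adj u w) :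
    NeighborsEscapeOn G A v := by
  intro u huA hvu
  by_cases hux : u = x
  · subst hux
    obtain ⟨w, hwA, hwu, huw, hnch⟩ := hx.exists_adj_not_chainOn v
    exact ⟨w, hwA, fun hwv => hnch (hwv ▸ .refl),
      fun hvw => hnch (.single ⟨⟨hv, hvx⟩, ⟨hwA, hwu⟩, hvw⟩), huw⟩
  · exact h u huA hux hvu

theorem NeighborsEscapeOn.of_diff_cutVertexOn [Finite V] (h : NeighborsEscapeOn G (A \ {x}) v)
    (hx : CutVertexOn G A x) (hv : v ∈ A) (hvx : v ≠ x) : NeighborsEscapeOn G A v :=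
  neighborsEscapeOn_of_cutVertexOn hx hv hvx fun u huA hux hvu =>
    let ⟨w, hw, hwv, hvw, huw⟩ := h u ⟨huA, hux⟩ hvu
    ⟨w, hw.1, hwv, hvw, huw⟩

end Escape

section Cutsets

variable {V : Type u} [DecidableEq V] {G : SimpleGraph V} {A : Set V} {T : Finset V} {v y : V}

theorem diff_coe_erase_diff_singleton (B : Set V) {t : V} (ht : t ∈ T) :
    (B \ ↑(T.erase t)) \ {t} = B \ ↑T := by
  rw [Finset.coe_erase, Set.sdiff_sdiff, Set.sdiff_union_self, Set.union_singleton,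
    Set.insert_eq_of_mem (Finset.mem_coe.mpr ht)]

theorem CutsetOn.of_diff_free (hT : CutsetOn G (A \ {v}) T) (hfree : IsFreeOn G A v)
    (hy : y ∈ A) (hvy : G.Adj v y) (hyT : y ∉ T) : CutsetOn G A T := by
  refine ⟨hT.1.trans Set.sdiff_subset, fun t ht => ?_⟩
  have hty : t ≠ y := fun h => hyT (h ▸ ht)
  have hcut := hT.2 t ht
  rw [Set.sdiff_sdiff_comm] at hcut
  exact (cutVertexOn_diff_free_iff (hfree.mono Set.sdiff_subset)
    ⟨hy, fun h => hyT (Finset.mem_of_mem_erase h)⟩ hvy (hT.1 ht).2 hty).mp hcut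

/-- Deleting the other neighbours of `v` isolates `v`, so each neighbour `u` joins the component
of `v` to that of its neighbour outside `N[v]`. -/
theorem NeighborsEscapeOn.exists_cutsetOn [Finite V] (h : NeighborsEscapeOn G A v) (hv : v ∈ A) :
    ∃ T : Finset V, CutsetOn G A T ∧ G.neighborSet v ∩ A ⊆ ↑T := by
  have hfin := Set.toFinite (G.neighborSet v ∩ A)
  refine ⟨hfin.toFinset, ⟨by simp, fun u hu => ?_⟩, by simp⟩
  rw [Set.Finite.mem_toFinset] at hu
  obtain ⟨w, hwA, hwv, hvw, huw⟩ := h u hu.2 hu.1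
  have hrest : (A \ ↑(hfin.toFinset.erase u)) \ {u} = A \ (G.neighborSet v ∩ A) := by
    rw [diff_coe_erase_diff_singleton _ (hfin.mem_toFinset.mpr hu), hfin.coe_toFinset]
  refine cutVertexOn_of_not_chainOn ⟨hu.2, by simp⟩ (hrest ▸ ⟨hv, fun h => G.irrefl h.1⟩)
    (hrest ▸ ⟨hwA, fun h => hvw h.1⟩) hu.1.symm huw ?_
  rw [hrest]
  exact fun hch => hwv (hch.eq_of_isolated fun c hc hvc => hc.2 ⟨hvc, hc.1⟩).symm

theorem neighborsEscapeOn_of_cutsetOn [Finite V] (hT : CutsetOn G A T)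
    (hN : G.neighborSet v ∩ A ⊆ ↑T) :
    NeighborsEscapeOn G A v := by
  intro u huA hvu
  have huT : u ∈ T := hN ⟨hvu, huA⟩
  obtain ⟨w, ⟨hwA, hwT'⟩, hwu, huw, hnch⟩ := (hT.2 u huT).exists_adj_not_chainOn v
  have hwT : w ∉ T := fun h => hwT' (Finset.mem_coe.mpr (Finset.mem_erase.mpr ⟨hwu, h⟩))
  exact ⟨w, hwA, fun hwv => hnch (hwv ▸ .refl), fun hvw => hwT (hN ⟨hvw, hwA⟩), huw⟩

end Cutsets

section CliqueAt

variable {V : Type u} {G G' : SimpleGraph V} {A S B : Set V} {a b v x : V}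

theorem cliqueAtOn_adj : (cliqueAtOn G A x).Adj a b ↔
    G.Adj a b ∨ (a ≠ b ∧ a ∈ A ∧ b ∈ A ∧ G.Adj x a ∧ G.Adj x b) := by
  simp only [cliqueAtOn, sup_adj, fromRel_adj]
  tauto

theorem le_cliqueAtOn : G ≤ cliqueAtOn G A x := le_sup_left

theorem isFreeOn_cliqueAtOn (hfree : IsFreeOn G A v) (hx : x ∈ A) :
    IsFreeOn (cliqueAtOn G A x) A v := by
  have mixed : ∀ a ∈ A, ∀ b ∈ A, G.Adj v a → G.Adj x v → G.Adj x b → a ≠ b →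
      (cliqueAtOn G A x).Adj a b := by
    intro a ha b hb hva hxv hxb hab
    by_cases hax : a = x
    · exact le_cliqueAtOn (hax ▸ hxb)
    · have hxa : G.Adj x a := (hfree a ha x hx hva hxv.symm hax).symm
      exact cliqueAtOn_adj.mpr (.inr ⟨hab, ha, hb, hxa, hxb⟩)
  intro a ha b hb hva hvb hab
  rcases cliqueAtOn_adj.mp hva with hva | ⟨-, -, -, hxv, hxa⟩ <;>
    rcases cliqueAtOn_adj.mp hvb with hvb | ⟨-, -, -, hxv', hxb⟩
  · exact le_cliqueAtOn (hfree a ha b hb hva hvb hab)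
  · exact mixed a ha b hb hva hxv' hxb hab
  · exact (mixed b hb a ha hvb hxv hxa hab.symm).symm
  · exact cliqueAtOn_adj.mpr (.inr ⟨hab, ha, hb, hxa, hxb⟩)

/-- An edge `uw` added by the clique at `x` comes from the path `u x w`, and `x ∉ N[v]` unless
`vw` is an added edge too. -/
theorem NeighborsEscapeOn.of_cliqueAtOn [Finite V] (h : NeighborsEscapeOn (cliqueAtOn G A x) B v)
    (hBA : B ⊆ A) (hB : ∀ u ∈ A, u ≠ x → u ∈ B) (hx : CutVertexOn G A x) (hv : v ∈ A)
    (hvx : v ≠ x) : NeighborsEscapeOn G A v := by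
  refine neighborsEscapeOn_of_cutVertexOn hx hv hvx fun u huA hux hvu => ?_
  obtain ⟨w, hwB, hwv, hvw, huw⟩ := h u (hB u huA hux) (le_cliqueAtOn hvu)
  rcases cliqueAtOn_adj.mp huw with huw | ⟨-, -, hwA, hxu, hxw⟩
  · exact ⟨w, hBA hwB, hwv, fun h => hvw (le_cliqueAtOn h), huw⟩
  · refine ⟨x, hx.1, hvx.symm, fun hvx' => hvw ?_, hxu.symm⟩
    exact cliqueAtOn_adj.mpr (.inr ⟨hwv.symm, hv, hwA, hvx'.symm, hxw⟩)

def AgreeOn (G G' : SimpleGraph V) (A : Set V) : Prop :=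
  ∀ a ∈ A, ∀ b ∈ A, G.Adj a b ↔ G'.Adj a b

theorem AgreeOn.mono (h : AgreeOn G G' A) (hS : S ⊆ A) : AgreeOn G G' S :=
  fun a ha b hb => h a (hS ha) b (hS hb)

theorem AgreeOn.induce_eq (h : AgreeOn G G' A) : G.induce A = G'.induce A := by
  ext p q
  exact h p p.2 q q.2

theorem AgreeOn.cComp_eq (h : AgreeOn G G' A) : cComp G A = cComp G' A := by
  rw [cComp, cComp, h.induce_eq]

theorem AgreeOn.cutVertexOn_iff (h : AgreeOn G G' A) :
    CutVertexOn G A x ↔ CutVertexOn G' A x := by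
  rw [CutVertexOn, CutVertexOn, h.cComp_eq, (h.mono Set.sdiff_subset).cComp_eq]

theorem AgreeOn.cutsetOn_iff [DecidableEq V] (h : AgreeOn G G' A) {T : Finset V} :
    CutsetOn G A T ↔ CutsetOn G' A T :=
  and_congr_right fun _ => forall₂_congr fun _ _ => (h.mono Set.sdiff_subset).cutVertexOn_iff

theorem AgreeOn.unmixedOn_iff [DecidableEq V] (h : AgreeOn G G' A) :
    UnmixedOn G A ↔ UnmixedOn G' A :=
  forall_congr' fun _ => by rw [h.cutsetOn_iff, h.cComp_eq, (h.mono Set.sdiff_subset).cComp_eq]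

theorem AgreeOn.cliqueAtOn (h : AgreeOn G G' A) (hx : x ∈ A) :
    AgreeOn (cliqueAtOn G A x) (cliqueAtOn G' A x) A := by
  intro a ha b hb
  rw [cliqueAtOn_adj, cliqueAtOn_adj, h a ha b hb, h x hx a ha, h x hx b hb]

theorem agreeOn_cliqueAtOn_diff :
    AgreeOn (cliqueAtOn G A x) (cliqueAtOn G (A \ {v}) x) (A \ {v}) := by
  intro a ha b hb
  simp only [cliqueAtOn_adj, ha, hb, ha.1, hb.1, true_and]

theorem StronglyUnmixedOn.congr [DecidableEq V] (h : StronglyUnmixedOn G A) (hG : AgreeOn G G' A) :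
    StronglyUnmixedOn G' A := by
  induction h generalizing G' with
  | complete G A hc => exact .complete G' A (hG.induce_eq ▸ hc)
  | cut G A hU x hx _ _ _ ih₁ ih₂ ih₃ =>
    exact .cut G' A (hG.unmixedOn_iff.mp hU) x (hG.cutVertexOn_iff.mp hx)
      (ih₁ (hG.mono Set.sdiff_subset)) (ih₂ (hG.cliqueAtOn hx.1))
      (ih₃ ((hG.cliqueAtOn hx.1).mono Set.sdiff_subset))

end CliqueAt

section Deletion

variable {V : Type u} [Finite V] [DecidableEq V] {G : SimpleGraph V} {A : Set V} {v : V}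

theorem UnmixedOn.diff_free (hU : UnmixedOn G A) (hfree : IsFreeOn G A v)
    (hesc : ¬ NeighborsEscapeOn G A v) : UnmixedOn G (A \ {v}) := by
  intro T hT
  obtain ⟨y, hyA, hvy, hyT⟩ : ∃ y ∈ A, G.Adj v y ∧ y ∉ T := by
    by_contra! hN
    exact hesc (neighborsEscapeOn_of_cutsetOn hT fun u hu => hN u hu.2.1 hu.1).of_diff_self
  rw [Set.sdiff_sdiff_comm, cComp_diff_free_eq (hfree.mono Set.sdiff_subset) ⟨hyA, hyT⟩ hvy,
    hU T (hT.of_diff_free hfree hyA hvy hyT), cComp_diff_free_eq hfree hyA hvy]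

theorem StronglyUnmixedOn.diff_free (h : StronglyUnmixedOn G A) (hfree : IsFreeOn G A v)
    (hv : v ∈ A) (hesc : ¬ NeighborsEscapeOn G A v) : StronglyUnmixedOn G (A \ {v}) := by
  induction h with
  | complete G A hc =>
    refine .complete G _ fun p q hpq hpq' => ?_
    rw [reachable_induce_iff_chainOn] at hpq
    exact hc (Set.inclusion Set.sdiff_subset p) (Set.inclusion Set.sdiff_subset q)
      ((reachable_induce_iff_chainOn _ _).mpr (hpq.mono Set.sdiff_subset))
      ((Set.inclusion_injective _).ne hpq')
  | cut G A hU x hx _ _ _ ih₁ ih₂ ih₃ =>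
    have hvx : v ≠ x := by
      rintro rfl
      exact not_cutVertexOn_of_isFreeOn hfree hx
    obtain ⟨y, hyA, hyx, hvy⟩ : ∃ y ∈ A, y ≠ x ∧ G.Adj v y := by
      by_contra! hN
      exact hesc (neighborsEscapeOn_of_cutVertexOn hx hv hvx fun u hu hux hvu =>
        absurd hvu (hN u hu hux))
    have hfree' := isFreeOn_cliqueAtOn hfree hx.1
    refine .cut G (A \ {v}) (hU.diff_free hfree hesc) x
      ((cutVertexOn_diff_free_iff hfree hyA hvy hvx.symm hyx.symm).mpr hx) ?_ ?_ ?_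
    · rw [Set.sdiff_sdiff_comm]
      exact ih₁ (hfree.mono Set.sdiff_subset) ⟨hv, hvx⟩ fun h =>
        hesc (h.of_diff_cutVertexOn hx hv hvx)
    · refine (ih₂ hfree' hv fun h => hesc ?_).congr agreeOn_cliqueAtOn_diff
      exact h.of_cliqueAtOn subset_rfl (fun u hu _ => hu) hx hv hvx
    · rw [Set.sdiff_sdiff_comm]
      refine (ih₃ (hfree'.mono Set.sdiff_subset) ⟨hv, hvx⟩ fun h => hesc ?_).congr
        (agreeOn_cliqueAtOn_diff.mono (Set.sdiff_subset_sdiff_left Set.sdiff_subset))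
      exact h.of_cliqueAtOn Set.sdiff_subset (fun u hu hux => ⟨hu, hux⟩) hx hv hvx

end Deletion

/-- if `v` is a free vertex of `G`, `J_G` is strongly unmixed and no
cutset of `G` contains `N_G(v)`, then `J_{G∖{v}}` is strongly unmixed. -/
theorem stronglyUnmixed_delete_free_vertex {V : Type u} [Fintype V] [DecidableEq V]
    (G : SimpleGraph V) (v : V) (hfree : FreeVertex G v)
    (hsu : StronglyUnmixedOn G Set.univ)
    (hnT : ¬ ∃ T : Finset V, CutsetOn G Set.univ T ∧ G.neighborSet v ⊆ ↑T) :
    StronglyUnmixedOn G ({v}ᶜ : Set V) := by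
  have hesc : ¬ NeighborsEscapeOn G Set.univ v := fun h =>
    let ⟨T, hT, hN⟩ := h.exists_cutsetOn (Set.mem_univ v)
    hnT ⟨T, hT, fun u hu => hN ⟨hu, Set.mem_univ u⟩⟩
  rw [Set.compl_eq_univ_sdiff]
  exact hsu.diff_free (fun a _ b _ => hfree a b) (Set.mem_univ v) hesc
end
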